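/- arXiv:math/0212209 — 2 statements merged into one kernel-verified Lean document; each statement's English description precedes it below -/
import Mathlib

section
/- Let P, Q be nonzero polynomials in Z[T] with deg(P) ≤ 1 and deg(Q) ≤ 2. Then for any complex number ξ, |Res(P,Q)| ≤ H(P)² H(Q) ( 3 |P(ξ)|/H(P) + |Q(ξ)|/H(Q) ), where Res is the resultant with respect to degrees 1 and 2. -/
/-!
Write `A = p₀ + p₁ξ` and `B = q₀ + q₁ξ + q₂ξ²`. The resultant is an explicit combination of the
two values: `Res = (p₀q₂ - p₁q₁ - p₁q₂ξ) A + p₁² B`, whose cofactors are bounded by `3 H(P) H(Q)`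
and `H(P)²` as soon as `|ξ| ≤ 1`. Reversing both polynomials preserves the resultant and turns
`ξ` into `ξ⁻¹`, dividing `A` and `B` by `ξ` and `ξ²`, which settles the case `|ξ| > 1`.
-/

open Polynomial

/-- Height of an integer polynomial of degree at most 2, as a real number. -/
noncomputable def HZ2 (P : Polynomial ℤ) : ℝ :=
  max |(P.coeff 0 : ℝ)| (max |(P.coeff 1 : ℝ)| |(P.coeff 2 : ℝ)|)

/-- The resultant of two polynomials of degrees at most 1 and 2,
computed as the Sylvester determinant with respect to degree bounds 1 and 2. -/
def res12 (P Q : Polynomial ℤ) : ℤ :=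
  Matrix.det !![P.coeff 1, P.coeff 0, 0;
                0, P.coeff 1, P.coeff 0;
                Q.coeff 2, Q.coeff 1, Q.coeff 0]

section NormedField

variable {𝕜 : Type*} [NormedField 𝕜] {p₀ p₁ q₀ q₁ q₂ : 𝕜} {H K : ℝ}

theorem norm_linear_quadratic_res_le_of_norm_le_one
    (hp₀ : ‖p₀‖ ≤ H) (hp₁ : ‖p₁‖ ≤ H) (hq₁ : ‖q₁‖ ≤ K) (hq₂ : ‖q₂‖ ≤ K)
    {ξ : 𝕜} (hξ : ‖ξ‖ ≤ 1) :
    ‖p₁ ^ 2 * q₀ - p₁ * p₀ * q₁ + p₀ ^ 2 * q₂‖ ≤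
      3 * H * K * ‖p₀ + p₁ * ξ‖ + H ^ 2 * ‖q₀ + q₁ * ξ + q₂ * ξ ^ 2‖ := by
  have hH : 0 ≤ H := (norm_nonneg _).trans hp₀
  have hK : 0 ≤ K := (norm_nonneg _).trans hq₁
  have hcofactor : ‖p₀ * q₂ - p₁ * q₁ - p₁ * q₂ * ξ‖ ≤ 3 * H * K :=
    calc ‖p₀ * q₂ - p₁ * q₁ - p₁ * q₂ * ξ‖
        ≤ ‖p₀‖ * ‖q₂‖ + ‖p₁‖ * ‖q₁‖ + ‖p₁‖ * ‖q₂‖ * ‖ξ‖ := by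
          refine (norm_sub_le _ _).trans ?_
          rw [norm_mul, norm_mul]
          gcongr
          simpa only [norm_mul] using norm_sub_le (p₀ * q₂) (p₁ * q₁)
      _ ≤ H * K + H * K + H * K * 1 := by gcongr
      _ = 3 * H * K := by ring
  calc ‖p₁ ^ 2 * q₀ - p₁ * p₀ * q₁ + p₀ ^ 2 * q₂‖
      = ‖(p₀ * q₂ - p₁ * q₁ - p₁ * q₂ * ξ) * (p₀ + p₁ * ξ) +
          p₁ ^ 2 * (q₀ + q₁ * ξ + q₂ * ξ ^ 2)‖ := by ring_nf
    _ ≤ 3 * H * K * ‖p₀ + p₁ * ξ‖ + H ^ 2 * ‖q₀ + q₁ * ξ + q₂ * ξ ^ 2‖ := by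
      refine (norm_add_le _ _).trans ?_
      rw [norm_mul, norm_mul, norm_pow]
      gcongr

theorem norm_linear_quadratic_res_le
    (hp₀ : ‖p₀‖ ≤ H) (hp₁ : ‖p₁‖ ≤ H) (hq₀ : ‖q₀‖ ≤ K) (hq₁ : ‖q₁‖ ≤ K) (hq₂ : ‖q₂‖ ≤ K)
    (ξ : 𝕜) :
    ‖p₁ ^ 2 * q₀ - p₁ * p₀ * q₁ + p₀ ^ 2 * q₂‖ ≤
      3 * H * K * ‖p₀ + p₁ * ξ‖ + H ^ 2 * ‖q₀ + q₁ * ξ + q₂ * ξ ^ 2‖ := by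
  rcases le_or_gt ‖ξ‖ 1 with hξ | hξ
  · exact norm_linear_quadratic_res_le_of_norm_le_one hp₀ hp₁ hq₁ hq₂ hξ
  have hξ₀ : ξ ≠ 0 := norm_pos_iff.mp (one_pos.trans hξ)
  have hinv : ‖ξ‖⁻¹ ≤ 1 := inv_le_one_of_one_le₀ hξ.le
  have hrev := norm_linear_quadratic_res_le_of_norm_le_one hp₁ hp₀ hq₁ hq₀
    (q₀ := q₂) (ξ := ξ⁻¹) (by rwa [norm_inv])
  have hA : p₁ + p₀ * ξ⁻¹ = (p₀ + p₁ * ξ) * ξ⁻¹ := by field_simp; ring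
  have hB : q₂ + q₁ * ξ⁻¹ + q₀ * ξ⁻¹ ^ 2 = (q₀ + q₁ * ξ + q₂ * ξ ^ 2) * (ξ⁻¹) ^ 2 := by
    field_simp; ring
  rw [hA, hB, norm_mul, norm_mul, norm_pow, norm_inv] at hrev
  have hH : 0 ≤ H := (norm_nonneg _).trans hp₀
  have hK : 0 ≤ K := (norm_nonneg _).trans hq₀
  calc ‖p₁ ^ 2 * q₀ - p₁ * p₀ * q₁ + p₀ ^ 2 * q₂‖
      = ‖p₀ ^ 2 * q₂ - p₀ * p₁ * q₁ + p₁ ^ 2 * q₀‖ := by ring_nf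
    _ ≤ _ := hrev
    _ ≤ 3 * H * K * ‖p₀ + p₁ * ξ‖ + H ^ 2 * ‖q₀ + q₁ * ξ + q₂ * ξ ^ 2‖ := by
      gcongr
      · exact mul_le_of_le_one_right (norm_nonneg _) hinv
      · exact mul_le_of_le_one_right (norm_nonneg _) (pow_le_one₀ (by positivity) hinv)

end NormedField

theorem aeval_of_degree_le_one {P : ℤ[X]} (hP : P.degree ≤ 1) (ξ : ℂ) :
    aeval ξ P = (P.coeff 0 : ℂ) + (P.coeff 1 : ℂ) * ξ := by
  conv_lhs => rw [eq_X_add_C_of_degree_le_one hP]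
  simp [add_comm]

theorem aeval_of_degree_le_two {Q : ℤ[X]} (hQ : Q.degree ≤ 2) (ξ : ℂ) :
    aeval ξ Q = (Q.coeff 0 : ℂ) + (Q.coeff 1 : ℂ) * ξ + (Q.coeff 2 : ℂ) * ξ ^ 2 := by
  rw [aeval_eq_sum_range' (Nat.lt_succ_of_le (natDegree_le_of_degree_le hQ))]
  simp [Finset.sum_range_succ, zsmul_eq_mul]

theorem res12_eq (P Q : ℤ[X]) :
    res12 P Q = P.coeff 1 ^ 2 * Q.coeff 0 - P.coeff 1 * P.coeff 0 * Q.coeff 1 +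
      P.coeff 0 ^ 2 * Q.coeff 2 := by
  simp only [res12, Matrix.det_fin_three, Matrix.of_apply, Matrix.cons_val', Matrix.cons_val_zero,
    Matrix.cons_val_fin_one, Matrix.cons_val_one, Matrix.cons_val, mul_zero, zero_mul, sub_zero,
    add_zero]
  ring

theorem abs_coeff_le_HZ2 (P : ℤ[X]) {i : ℕ} (hi : i ≤ 2) : |(P.coeff i : ℝ)| ≤ HZ2 P := by
  unfold HZ2
  interval_cases i
  · exact le_max_left _ _
  · exact (le_max_left _ _).trans (le_max_right _ _)
  · exact (le_max_right _ _).trans (le_max_right _ _)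

theorem norm_coeff_le_HZ2 (P : ℤ[X]) {i : ℕ} (hi : i ≤ 2) : ‖(P.coeff i : ℂ)‖ ≤ HZ2 P := by
  rw [Complex.norm_intCast]
  exact abs_coeff_le_HZ2 P hi

theorem HZ2_pos {P : ℤ[X]} (hP0 : P ≠ 0) (hP : P.degree ≤ 2) : 0 < HZ2 P :=
  calc (0 : ℝ) < |(P.leadingCoeff : ℝ)| := by
        exact_mod_cast abs_pos.mpr (leadingCoeff_ne_zero.mpr hP0)
    _ ≤ HZ2 P := abs_coeff_le_HZ2 P (natDegree_le_of_degree_le hP)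

theorem resultant_bound_deg_one_two (P Q : Polynomial ℤ)
    (hP0 : P ≠ 0) (hQ0 : Q ≠ 0) (hP : P.degree ≤ 1) (hQ : Q.degree ≤ 2) (ξ : ℂ) :
    |(res12 P Q : ℝ)| ≤
      HZ2 P ^ 2 * HZ2 Q *
        (3 * ‖aeval ξ P‖ / HZ2 P + ‖aeval ξ Q‖ / HZ2 Q) := by
  have hHP := HZ2_pos hP0 (hP.trans (by norm_num))
  have hHQ := HZ2_pos hQ0 hQ
  have hbound := norm_linear_quadratic_res_le (norm_coeff_le_HZ2 P (i := 0) (by norm_num))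
    (norm_coeff_le_HZ2 P (i := 1) (by norm_num)) (norm_coeff_le_HZ2 Q (i := 0) (by norm_num))
    (norm_coeff_le_HZ2 Q (i := 1) (by norm_num)) (norm_coeff_le_HZ2 Q (i := 2) le_rfl) ξ
  rw [← aeval_of_degree_le_one hP, ← aeval_of_degree_le_two hQ] at hbound
  calc |(res12 P Q : ℝ)|
      = ‖((res12 P Q : ℤ) : ℂ)‖ := (Complex.norm_intCast _).symm
    _ ≤ 3 * HZ2 P * HZ2 Q * ‖aeval ξ P‖ + HZ2 P ^ 2 * ‖aeval ξ Q‖ := by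
      rw [res12_eq]; push_cast; exact hbound
    _ = HZ2 P ^ 2 * HZ2 Q * (3 * ‖aeval ξ P‖ / HZ2 P + ‖aeval ξ Q‖ / HZ2 Q) := by
      field_simp
end

section
/- Let P, Q ∈ Z[T] be nonzero polynomials of degree at most 2 whose greatest common divisor L ∈ Z[T] has degree 1. Then for any complex number ξ, H(L)|L(ξ)| ≤ γ ( H(P)|Q(ξ)| + H(Q)|P(ξ)| ), where γ = (1+√5)/2. -/
/-!
Write `P = L P₁`, `Q = L Q₁` with `L = a T + b`, `P₁ = c T + d`, `Q₁ = e T + f`. In Gelfond's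
inequality `H(L) H(P₁) ≤ γ H(P)` the only hard case is `H(L) H(P₁) = |b c|` (or symmetrically
`|a d|`): unless `|b| ≤ γ |a|` or `|c| ≤ γ |d|`, which bound `|b c|` by `γ |a c|` or `γ |b d|`,
we get `|a d| ≤ |b c| / γ²`, so the middle coefficient satisfies `|a d + b c| ≥ |b c| / γ`
because `γ² = γ + 1`. Since `L` is the gcd, `P₁` and `Q₁` are coprime, so either their resultant
`c f - d e` is a nonzero integer, which equals `c Q₁(ξ) - e P₁(ξ)`, or `P₁` is a nonzero integer
constant. In both cases `1 ≤ H(P₁)|Q₁(ξ)| + H(Q₁)|P₁(ξ)|`, and multiplying by `H(L)|L(ξ)|` gives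
the claim.
-/

open Polynomial

/-- The golden ratio. -/
noncomputable def gr : ℝ := (1 + Real.sqrt 5) / 2

lemma gr_sq : gr ^ 2 = gr + 1 := by
  have h5 : Real.sqrt 5 ^ 2 = 5 := Real.sq_sqrt (by norm_num)
  unfold gr
  linear_combination h5 / 4

lemma one_le_gr : 1 ≤ gr := by
  have : (1 : ℝ) ≤ Real.sqrt 5 := Real.one_le_sqrt.mpr (by norm_num)
  unfold gr
  linarith

section Gelfond

variable (a b c d : ℝ)

lemma abs_mul_abs_le_gr_mul_max :
    |b| * |c| ≤ gr * max |b * d| (max |a * d + b * c| |a * c|) := by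
  set M := max |b * d| (max |a * d + b * c| |a * c|)
  have hBD : |b| * |d| ≤ M := by rw [← abs_mul]; exact le_max_left _ _
  have hAC : |a| * |c| ≤ M := by
    rw [← abs_mul]; exact (le_max_right _ _).trans (le_max_right _ _)
  have hE : |b| * |c| - |a| * |d| ≤ M := by
    rw [← abs_mul, ← abs_mul]
    refine (abs_sub_abs_le_abs_add _ _).trans ?_
    rw [add_comm]
    exact (le_max_left _ _).trans (le_max_right _ _)
  have hγ := one_le_gr
  by_cases hba : |b| ≤ gr * |a|
  · calc |b| * |c| ≤ gr * |a| * |c| := by gcongr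
      _ ≤ gr * M := by rw [mul_assoc]; gcongr
  by_cases hcd : |c| ≤ gr * |d|
  · calc |b| * |c| ≤ |b| * (gr * |d|) := by gcongr
      _ = gr * (|b| * |d|) := by ring
      _ ≤ gr * M := by gcongr
  push Not at hba hcd
  have hAD : (gr + 1) * (|a| * |d|) ≤ |b| * |c| := by
    calc (gr + 1) * (|a| * |d|) = (gr * |a|) * (gr * |d|) := by rw [← gr_sq]; ring
      _ ≤ |b| * |c| := by gcongr
  have hAD' : gr * (|a| * |d|) ≤ (gr - 1) * (|b| * |c|) := by
    have h := mul_le_mul_of_nonneg_left hAD (sub_nonneg.mpr hγ)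
    rwa [← mul_assoc, show (gr - 1) * (gr + 1) = gr by linear_combination gr_sq] at h
  calc |b| * |c| ≤ gr * (|b| * |c| - |a| * |d|) := by linarith
    _ ≤ gr * M := by gcongr

lemma max_abs_mul_max_abs_le_gr_mul_max :
    max |b| |a| * max |d| |c| ≤ gr * max |b * d| (max |a * d + b * c| |a * c|) := by
  have hBC := abs_mul_abs_le_gr_mul_max a b c d
  have hAD := abs_mul_abs_le_gr_mul_max b a d c
  rw [show max |a * c| (max |b * c + a * d| |b * d|) = max |b * d| (max |a * d + b * c| |a * c|) by
    rw [add_comm]; ac_rfl] at hAD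
  set M := max |b * d| (max |a * d + b * c| |a * c|)
  have hM : M ≤ gr * M := le_mul_of_one_le_left ((abs_nonneg _).trans (le_max_left _ _)) one_le_gr
  have hBD : |b| * |d| ≤ M := by rw [← abs_mul]; exact le_max_left _ _
  have hAC : |a| * |c| ≤ M := by
    rw [← abs_mul]; exact (le_max_right _ _).trans (le_max_right _ _)
  rw [max_mul_of_nonneg _ _ (le_max_of_le_left (abs_nonneg _)),
    mul_max_of_nonneg _ _ (abs_nonneg _), mul_max_of_nonneg _ _ (abs_nonneg _)]
  exact max_le (max_le (hBD.trans hM) hBC) (max_le hAD (hAC.trans hM))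

end Gelfond

lemma HZ2_nonneg (P : ℤ[X]) : 0 ≤ HZ2 P :=
  (abs_nonneg _).trans (le_max_left _ _)

lemma one_le_HZ2 {P : ℤ[X]} (hP : P.degree ≤ 2) (hP0 : P ≠ 0) : 1 ≤ HZ2 P := by
  obtain ⟨n, hn⟩ : ∃ n, P.coeff n ≠ 0 := by
    by_contra! h
    exact hP0 (ext h)
  have hn2 : n ≤ 2 := by exact_mod_cast (le_degree_of_ne_zero hn).trans hP
  have h1 : (1 : ℝ) ≤ |(P.coeff n : ℝ)| := by exact_mod_cast Int.one_le_abs hn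
  unfold HZ2
  interval_cases n
  · exact h1.trans (le_max_left _ _)
  · exact h1.trans ((le_max_left _ _).trans (le_max_right _ _))
  · exact h1.trans ((le_max_right _ _).trans (le_max_right _ _))

lemma HZ2_of_degree_le_one {P : ℤ[X]} (hP : P.degree ≤ 1) :
    HZ2 P = max |(P.coeff 0 : ℝ)| |(P.coeff 1 : ℝ)| := by
  rw [HZ2, coeff_eq_zero_of_degree_lt (n := 2) (hP.trans_lt (by decide)), Int.cast_zero, abs_zero,
    max_eq_left (abs_nonneg (P.coeff 1 : ℝ))]

lemma degree_le_one_of_degree_mul_le_two {L P : ℤ[X]} (hL : L.degree = 1)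
    (h : (L * P).degree ≤ 2) : P.degree ≤ 1 := by
  rw [degree_mul, hL, show (2 : WithBot ℕ) = 1 + 1 from rfl] at h
  exact (WithBot.add_le_add_iff_left (by decide)).mp h

lemma HZ2_mul_le_gr_mul {L P : ℤ[X]} (hL : L.degree ≤ 1) (hP : P.degree ≤ 1) :
    HZ2 L * HZ2 P ≤ gr * HZ2 (L * P) := by
  have hL2 : L.coeff 2 = 0 := coeff_eq_zero_of_degree_lt (hL.trans_lt (by decide))
  have hP2 : P.coeff 2 = 0 := coeff_eq_zero_of_degree_lt (hP.trans_lt (by decide))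
  have h0 : (L * P).coeff 0 = L.coeff 0 * P.coeff 0 := mul_coeff_zero L P
  have h1 : (L * P).coeff 1 = L.coeff 1 * P.coeff 0 + L.coeff 0 * P.coeff 1 := by
    simp [coeff_mul, Finset.Nat.antidiagonal_succ, add_comm]
  have h2 : (L * P).coeff 2 = L.coeff 1 * P.coeff 1 := by
    simp [coeff_mul, Finset.Nat.antidiagonal_succ, hL2, hP2]
  rw [HZ2_of_degree_le_one hL, HZ2_of_degree_le_one hP, HZ2, h0, h1, h2]
  push_cast
  exact max_abs_mul_max_abs_le_gr_mul_max _ _ _ _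

lemma aeval_eq_of_degree_le_one {R A : Type*} [CommSemiring R] [Semiring A] [Algebra R A]
    {P : R[X]} (hP : P.degree ≤ 1) (x : A) :
    aeval x P = algebraMap R A (P.coeff 1) * x + algebraMap R A (P.coeff 0) := by
  conv_lhs => rw [eq_X_add_C_of_degree_le_one hP]
  simp

lemma isRelPrime_of_forall_dvd_dvd {R : Type*} [CommMonoidWithZero R] [IsCancelMulZero R]
    {L P Q : R} (hL : L ≠ 0) (hgcd : ∀ D, D ∣ L * P → D ∣ L * Q → D ∣ L) : IsRelPrime P Q := by
  intro D hP hQ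
  have hLD := hgcd (L * D) (mul_dvd_mul_left L hP) (mul_dvd_mul_left L hQ)
  exact isUnit_of_dvd_one ((mul_dvd_mul_iff_left hL).mp (by rwa [mul_one]))

section Linear

variable {P Q : ℤ[X]} (hP : P.degree ≤ 1) (hQ : Q.degree ≤ 1)
include hP hQ

lemma one_le_of_resultant_ne_zero (hr : P.coeff 1 * Q.coeff 0 - P.coeff 0 * Q.coeff 1 ≠ 0)
    (ξ : ℂ) : 1 ≤ HZ2 P * ‖aeval ξ Q‖ + HZ2 Q * ‖aeval ξ P‖ := by
  have hres : ((P.coeff 1 * Q.coeff 0 - P.coeff 0 * Q.coeff 1 : ℤ) : ℂ) =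
      P.coeff 1 * aeval ξ Q - Q.coeff 1 * aeval ξ P := by
    simp only [aeval_eq_of_degree_le_one hP, aeval_eq_of_degree_le_one hQ, algebraMap_int_eq,
      eq_intCast]
    push_cast
    ring
  have hc : |(P.coeff 1 : ℝ)| ≤ HZ2 P := (le_max_left _ _).trans (le_max_right _ _)
  have he : |(Q.coeff 1 : ℝ)| ≤ HZ2 Q := (le_max_left _ _).trans (le_max_right _ _)
  calc (1 : ℝ) ≤ ‖((P.coeff 1 * Q.coeff 0 - P.coeff 0 * Q.coeff 1 : ℤ) : ℂ)‖ := by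
        rw [Complex.norm_intCast]; exact_mod_cast Int.one_le_abs hr
    _ ≤ ‖(P.coeff 1 : ℂ) * aeval ξ Q‖ + ‖(Q.coeff 1 : ℂ) * aeval ξ P‖ := by
        rw [hres]; exact norm_sub_le _ _
    _ = |(P.coeff 1 : ℝ)| * ‖aeval ξ Q‖ + |(Q.coeff 1 : ℝ)| * ‖aeval ξ P‖ := by
        rw [norm_mul, norm_mul, Complex.norm_intCast, Complex.norm_intCast]
    _ ≤ HZ2 P * ‖aeval ξ Q‖ + HZ2 Q * ‖aeval ξ P‖ := by gcongr

lemma coeff_one_eq_zero_of_resultant_eq_zero (hPQ : IsRelPrime P Q)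
    (hr : P.coeff 1 * Q.coeff 0 - P.coeff 0 * Q.coeff 1 = 0) : P.coeff 1 = 0 := by
  by_contra hc
  have hprop : C (Q.coeff 1) * P = C (P.coeff 1) * Q := by
    conv_lhs => rw [eq_X_add_C_of_degree_le_one hP]
    conv_rhs => rw [eq_X_add_C_of_degree_le_one hQ]
    have h : C (P.coeff 1) * C (Q.coeff 0) = C (Q.coeff 1) * C (P.coeff 0) := by
      rw [← C_mul, ← C_mul]; congr 1; linear_combination hr
    linear_combination -h
  have hdvd : P ∣ C (P.coeff 1) :=
    hPQ.dvd_of_dvd_mul_right ⟨C (Q.coeff 1), by rw [← hprop, mul_comm]⟩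
  have hdeg := degree_le_of_dvd hdvd (C_ne_zero.mpr hc)
  rw [degree_C hc] at hdeg
  exact hc (coeff_eq_zero_of_degree_lt (hdeg.trans_lt (by decide)))

lemma one_le_HZ2_mul_norm_aeval_add (hP0 : P ≠ 0) (hQ0 : Q ≠ 0) (hPQ : IsRelPrime P Q) (ξ : ℂ) :
    1 ≤ HZ2 P * ‖aeval ξ Q‖ + HZ2 Q * ‖aeval ξ P‖ := by
  by_cases hr : P.coeff 1 * Q.coeff 0 - P.coeff 0 * Q.coeff 1 = 0
  · have hc := coeff_one_eq_zero_of_resultant_eq_zero hP hQ hPQ hr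
    have hd : P.coeff 0 ≠ 0 := fun hd => hP0 (by rw [eq_X_add_C_of_degree_le_one hP, hc, hd]; simp)
    have hPξ : 1 ≤ ‖aeval ξ P‖ := by
      simp only [aeval_eq_of_degree_le_one hP, hc, algebraMap_int_eq, eq_intCast]
      simpa using (by exact_mod_cast Int.one_le_abs hd : (1 : ℝ) ≤ |(P.coeff 0 : ℝ)|)
    calc (1 : ℝ) ≤ HZ2 Q * ‖aeval ξ P‖ :=
          one_le_mul_of_one_le_of_one_le (one_le_HZ2 (hQ.trans (by decide)) hQ0) hPξ
      _ ≤ HZ2 P * ‖aeval ξ Q‖ + HZ2 Q * ‖aeval ξ P‖ :=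
          le_add_of_nonneg_left (mul_nonneg (HZ2_nonneg P) (norm_nonneg _))
  · exact one_le_of_resultant_ne_zero hP hQ hr ξ

end Linear

theorem common_factor_bound (P Q L : Polynomial ℤ)
    (hP0 : P ≠ 0) (hQ0 : Q ≠ 0) (hP : P.degree ≤ 2) (hQ : Q.degree ≤ 2)
    (hLP : L ∣ P) (hLQ : L ∣ Q)
    (hgcd : ∀ D : Polynomial ℤ, D ∣ P → D ∣ Q → D ∣ L)
    (hLdeg : L.degree = 1) (ξ : ℂ) :
    HZ2 L * ‖aeval ξ L‖ ≤
      gr * (HZ2 P * ‖aeval ξ Q‖ + HZ2 Q * ‖aeval ξ P‖) := by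
  obtain ⟨P₁, rfl⟩ := hLP
  obtain ⟨Q₁, rfl⟩ := hLQ
  have hL0 : L ≠ 0 := ne_zero_of_degree_gt (n := 0) (by rw [hLdeg]; decide)
  have hP₁ := degree_le_one_of_degree_mul_le_two hLdeg hP
  have hQ₁ := degree_le_one_of_degree_mul_le_two hLdeg hQ
  have hPQ : IsRelPrime P₁ Q₁ := isRelPrime_of_forall_dvd_dvd hL0 hgcd
  have hsum := one_le_HZ2_mul_norm_aeval_add hP₁ hQ₁ (right_ne_zero_of_mul hP0)
    (right_ne_zero_of_mul hQ0) hPQ ξ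
  have hLP₁ := HZ2_mul_le_gr_mul hLdeg.le hP₁
  have hLQ₁ := HZ2_mul_le_gr_mul hLdeg.le hQ₁
  simp only [map_mul, norm_mul]
  calc HZ2 L * ‖aeval ξ L‖
      ≤ HZ2 L * (HZ2 P₁ * ‖aeval ξ Q₁‖ + HZ2 Q₁ * ‖aeval ξ P₁‖) * ‖aeval ξ L‖ := by
        gcongr; exact le_mul_of_one_le_right (HZ2_nonneg L) hsum
    _ = (HZ2 L * HZ2 P₁ * ‖aeval ξ Q₁‖ + HZ2 L * HZ2 Q₁ * ‖aeval ξ P₁‖) * ‖aeval ξ L‖ := by ring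
    _ ≤ (gr * HZ2 (L * P₁) * ‖aeval ξ Q₁‖ + gr * HZ2 (L * Q₁) * ‖aeval ξ P₁‖) * ‖aeval ξ L‖ := by
        gcongr
    _ = gr * (HZ2 (L * P₁) * (‖aeval ξ L‖ * ‖aeval ξ Q₁‖) +
          HZ2 (L * Q₁) * (‖aeval ξ L‖ * ‖aeval ξ P₁‖)) := by ring
end
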